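/- Fix R > 0, a small constant c ∈ (0,1), and a smooth nonincreasing cutoff χ_in with χ_in(ρ) = 1 for ρ ≤ −1/2 and χ_in(ρ) = 0 for ρ ≥ −1/4, a smooth nondecreasing cutoff χ_{>5R}(r) vanishing for r ≤ 5R and equal to 1 for r ≥ 6R, and an increasing weight ρ_R : [R,∞) → [1,2] with ρ_R' ≥ 0. Define on ℝ^d × (ℝ^d ∖ {0}) the symbol q(x,ξ) = ρ_R(|x|) χ_{>5R}(|x|) χ_in(cos θ − c ρ_R(|x|)), where cos θ = (x·ξ)/(|x||ξ|). Then for the flat Hamiltonian a₀(x,ξ) = |ξ|², the Poisson bracket satisfies −{a₀, q}(x,ξ) ≥ 0 at every point, provided c is sufficiently small. -/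

import Mathlib

open Filter Topology

lemma aux_mono_deriv_nonneg {f : ℝ → ℝ} {r f' : ℝ} (hf : HasDerivAt f f' r)
    (hm : Monotone f) : 0 ≤ f' := by
  have h := hasDerivAt_iff_tendsto_slope.1 hf
  have h2 : Tendsto (slope f r) (𝓝[>] r) (𝓝 f') :=
    h.mono_left (nhdsWithin_mono r fun t ht => ne_of_gt ht)
  refine ge_of_tendsto h2 ?_
  filter_upwards [self_mem_nhdsWithin] with t ht
  have : (0:ℝ) ≤ (f t - f r) / (t - r) :=
    div_nonneg (sub_nonneg.2 (hm ht.le)) (sub_nonneg.2 ht.le)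
  simpa [slope_def_field, div_eq_mul_inv] using this

lemma aux_anti_deriv_nonpos {f : ℝ → ℝ} {r f' : ℝ} (hf : HasDerivAt f f' r)
    (hm : Antitone f) : f' ≤ 0 := by
  have := aux_mono_deriv_nonneg (f := fun t => -f t) hf.neg
    (fun a b hab => neg_le_neg (hm hab))
  linarith

lemma aux_deriv_zero_of_min {f : ℝ → ℝ} {r : ℝ} (h0 : f r = 0) (hpos : ∀ t, 0 ≤ f t) :
    deriv f r = 0 := by
  have : IsLocalMin f r := Filter.Eventually.of_forall fun t => by rw [h0]; exact hpos t
  exact this.deriv_eq_zero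

lemma aux_deriv_zero_of_const_gt {f : ℝ → ℝ} {r b v : ℝ} (hr : b < r)
    (hconst : ∀ t, b ≤ t → f t = v) : deriv f r = 0 := by
  have hev : f =ᶠ[𝓝 r] fun _ => v := by
    filter_upwards [Ioi_mem_nhds hr] with t ht
    exact hconst t ht.le
  rw [hev.deriv_eq, deriv_const]

lemma aux_deriv_zero_of_const_lt {f : ℝ → ℝ} {r b v : ℝ} (hr : r < b)
    (hconst : ∀ t, t ≤ b → f t = v) : deriv f r = 0 := by
  have hev : f =ᶠ[𝓝 r] fun _ => v := by
    filter_upwards [Iio_mem_nhds hr] with t ht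
    exact hconst t ht.le
  rw [hev.deriv_eq, deriv_const]

lemma aux_key (n k P c Rr a a' b b' e e' : ℝ)
    (hn : 0 < n) (hk : 0 < k) (hRr : 0 < Rr) (hc : 0 < c) (hc8 : c < 1/8)
    (hCS : P^2 ≤ n^2*k^2)
    (ha' : 0 ≤ a') (hb : 0 ≤ b) (hb' : 0 ≤ b') (he : 0 ≤ e) (he' : e' ≤ 0)
    (hb0 : n ≤ 5*Rr → b = 0 ∧ b' = 0)
    (ha12 : 5*Rr < n → 1 ≤ a ∧ a ≤ 2)
    (he0 : -(1/4 : ℝ) ≤ P*(n*k)⁻¹ - c*a → e = 0 ∧ e' = 0) :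
    2 * (a * b * (e' * (P * (-((n*k)^2)⁻¹ * (k * (1/(2*n) * (2*P)))) + (n*k)⁻¹ * k^2
        - c * (a' * (1/(2*n) * (2*P)))))
      + e * (a * (b' * (1/(2*n) * (2*P))) + b * (a' * (1/(2*n) * (2*P))))) ≤ 0 := by
  rcases le_or_gt n (5*Rr) with h | h
  · obtain ⟨h1, h2⟩ := hb0 h
    rw [h1, h2]; ring_nf <;> norm_num
  · obtain ⟨ha1, ha2⟩ := ha12 h
    by_cases heq : -(1/4 : ℝ) ≤ P*(n*k)⁻¹ - c*a
    · obtain ⟨h1, h2⟩ := he0 heq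
      rw [h1, h2]; ring_nf <;> norm_num
    · push_neg at heq
      have hnk : 0 < n*k := mul_pos hn hk
      have key1 : P*(n*k)⁻¹ < 0 := by nlinarith
      have hP : P < 0 := by
        have h2 := mul_neg_of_neg_of_pos key1 hnk
        have h3 : P*(n*k)⁻¹*(n*k) = P := by field_simp
        linarith [h3 ▸ h2]
      have hu : 1/(2*n) * (2*P) = P/n := by field_simp
      have hPn : P/n < 0 := div_neg_of_neg_of_pos hP hn
      have ha0 : (0:ℝ) ≤ a := by linarith
      -- first term
      have hW : 0 ≤ P * (-((n*k)^2)⁻¹ * (k * (1/(2*n) * (2*P)))) + (n*k)⁻¹ * k^2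
          - c * (a' * (1/(2*n) * (2*P))) := by
        have hW' : P * (-((n*k)^2)⁻¹ * (k * (1/(2*n) * (2*P)))) + (n*k)⁻¹ * k^2
            - c * (a' * (1/(2*n) * (2*P)))
            = (n^2*k^2 - P^2)/(n^3*k) + c*a'*(-P)/n := by
          field_simp
          ring
        rw [hW']
        have t1 : (0:ℝ) ≤ (n^2*k^2 - P^2)/(n^3*k) :=
          div_nonneg (by linarith) (by positivity)
        have t2 : (0:ℝ) ≤ c*a'*(-P)/n :=
          div_nonneg (mul_nonneg (mul_nonneg hc.le ha') (by linarith)) hn.le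
        linarith
      have hT1 : a * b * (e' * (P * (-((n*k)^2)⁻¹ * (k * (1/(2*n) * (2*P)))) + (n*k)⁻¹ * k^2
          - c * (a' * (1/(2*n) * (2*P))))) ≤ 0 := by
        have h6 : 0 ≤ a*b := mul_nonneg ha0 hb
        nlinarith [mul_nonneg h6 (mul_nonneg (neg_nonneg.2 he') hW)]
      -- second term
      have hT2 : e * (a * (b' * (1/(2*n) * (2*P))) + b * (a' * (1/(2*n) * (2*P)))) ≤ 0 := by
        rw [hu]
        have t1 : a * (b' * (P/n)) ≤ 0 :=
          mul_nonpos_of_nonneg_of_nonpos ha0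
            (mul_nonpos_of_nonneg_of_nonpos hb' hPn.le)
        have t2 : b * (a' * (P/n)) ≤ 0 :=
          mul_nonpos_of_nonneg_of_nonpos hb
            (mul_nonpos_of_nonneg_of_nonpos ha' hPn.le)
        exact mul_nonpos_of_nonneg_of_nonpos he (by linarith)
      linarith

/-- **Sign of the incoming multiplier bracket.** With cutoffs `χ_in`, `χ_{>5R}` and an
increasing weight `ρ_R : [R,∞) → [1,2]`, the symbol
`q(x,ξ) = ρ_R(|x|) χ_{>5R}(|x|) χ_in(cos θ − c ρ_R(|x|))`, `cos θ = x·ξ/(|x||ξ|)`,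
satisfies `−{a₀, q} = −2 ξ·∇ₓ q ≥ 0` for the flat Hamiltonian `a₀(x,ξ) = |ξ|²`,
provided `c` is sufficiently small. -/
theorem stmt_9 (d : ℕ) (R : ℝ) (hR : 0 < R)
    (χin χ5 ρR : ℝ → ℝ)
    (hχin_smooth : ContDiff ℝ (⊤ : ℕ∞) χin) (hχin_anti : Antitone χin)
    (hχin_one : ∀ s : ℝ, s ≤ -(1 / 2 : ℝ) → χin s = 1)
    (hχin_zero : ∀ s : ℝ, -(1 / 4 : ℝ) ≤ s → χin s = 0)
    (hχ5_smooth : ContDiff ℝ (⊤ : ℕ∞) χ5) (hχ5_mono : Monotone χ5)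
    (hχ5_zero : ∀ r : ℝ, r ≤ 5 * R → χ5 r = 0)
    (hχ5_one : ∀ r : ℝ, 6 * R ≤ r → χ5 r = 1)
    (hρ_smooth : ContDiff ℝ (⊤ : ℕ∞) ρR)
    (hρ_deriv : ∀ r : ℝ, 0 ≤ deriv ρR r)
    (hρ_range : ∀ r : ℝ, R ≤ r → ρR r ∈ Set.Icc (1 : ℝ) 2) :
    ∃ c₀ : ℝ, 0 < c₀ ∧
      ∀ c : ℝ, 0 < c → c < c₀ →
        ∀ x ξ : EuclideanSpace ℝ (Fin d), x ≠ 0 → ξ ≠ 0 →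
          0 ≤ -(2 * (inner ℝ ξ
              (gradient
                (fun y : EuclideanSpace ℝ (Fin d) =>
                  ρR ‖y‖ * χ5 ‖y‖ *
                    χin ((inner ℝ y ξ : ℝ) / (‖y‖ * ‖ξ‖) - c * ρR ‖y‖))
                x) : ℝ)) := by
  -- nonnegativity of the cutoffs
  have hχ5_nonneg : ∀ r, 0 ≤ χ5 r := by
    intro r
    rcases le_or_gt r (5 * R) with h | h
    · rw [hχ5_zero r h]
    · rw [← hχ5_zero (5 * R) le_rfl]; exact hχ5_mono h.le
  have hχin_nonneg : ∀ t, 0 ≤ χin t := by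
    intro t
    rcases le_or_gt (-(1/4 : ℝ)) t with h | h
    · rw [hχin_zero t h]
    · rw [← hχin_zero (-(1/4 : ℝ)) le_rfl]; exact hχin_anti h.le
  -- derivative of χ5 vanishes below 5R
  have hχ5_deriv_zero : ∀ r, r ≤ 5 * R → deriv χ5 r = 0 := by
    intro r hr
    rcases lt_or_eq_of_le hr with h | h
    · exact aux_deriv_zero_of_const_lt h hχ5_zero
    · subst h; exact aux_deriv_zero_of_min (hχ5_zero _ le_rfl) hχ5_nonneg
  -- derivative of χin vanishes above -1/4
  have hχin_deriv_zero : ∀ t, -(1/4 : ℝ) ≤ t → deriv χin t = 0 := by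
    intro t ht
    rcases lt_or_eq_of_le ht with h | h
    · exact aux_deriv_zero_of_const_gt h hχin_zero
    · subst h; exact aux_deriv_zero_of_min (hχin_zero _ le_rfl) hχin_nonneg
  refine ⟨1/8, by norm_num, fun c hc hc8 x ξ hx hξ => ?_⟩
  have hn : (0:ℝ) < ‖x‖ := norm_pos_iff.2 hx
  have hk : (0:ℝ) < ‖ξ‖ := norm_pos_iff.2 hξ
  -- derivative of the norm
  have hsq : HasFDerivAt (fun y : EuclideanSpace ℝ (Fin d) => ‖y‖^2) (2 • innerSL ℝ x) x :=
    (hasStrictFDerivAt_norm_sq x).hasFDerivAt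
  have hsqrt : HasDerivAt Real.sqrt (1/(2*Real.sqrt (‖x‖^2))) (‖x‖^2) :=
    Real.hasDerivAt_sqrt (by positivity)
  have hN0 := hsqrt.comp_hasFDerivAt x hsq
  have hfun : (fun y : EuclideanSpace ℝ (Fin d) => Real.sqrt (‖y‖^2)) = fun y => ‖y‖ :=
    funext fun y => Real.sqrt_sq (norm_nonneg y)
  have hN0' : HasFDerivAt (fun y : EuclideanSpace ℝ (Fin d) => ‖y‖)
      ((1/(2*Real.sqrt (‖x‖^2))) • (2 • innerSL ℝ x)) x := by
    rw [← hfun]; exact hN0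
  have hI : HasFDerivAt (fun y : EuclideanSpace ℝ (Fin d) => (inner ℝ y ξ : ℝ)) (innerSL ℝ ξ) x := by
    have : (fun y : EuclideanSpace ℝ (Fin d) => (inner ℝ y ξ : ℝ)) = fun y => innerSL ℝ ξ y := by
      funext y; rw [innerSL_apply_apply]; exact (real_inner_comm y ξ).symm
    rw [this]; exact (innerSL ℝ ξ).hasFDerivAt
  have hρd : HasDerivAt ρR (deriv ρR ‖x‖) ‖x‖ :=
    ((hρ_smooth.differentiable (by simp)) ‖x‖).hasDerivAt
  have hχ5d : HasDerivAt χ5 (deriv χ5 ‖x‖) ‖x‖ :=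
    ((hχ5_smooth.differentiable (by simp)) ‖x‖).hasDerivAt
  have hg1 := hρd.comp_hasFDerivAt x hN0'
  have hg2 := hχ5d.comp_hasFDerivAt x hN0'
  have hmk := hN0'.mul_const ‖ξ‖
  have hinv := (hasDerivAt_inv (x := ‖x‖ * ‖ξ‖) (by positivity)).comp_hasFDerivAt x hmk
  have hu := hI.mul hinv
  have hw := hu.sub (hg1.const_mul c)
  set s : ℝ := (inner ℝ x ξ : ℝ) * (‖x‖ * ‖ξ‖)⁻¹ - c * ρR ‖x‖ with hs
  have hχind : HasDerivAt χin (deriv χin s) s :=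
    ((hχin_smooth.differentiable (by simp)) s).hasDerivAt
  have hχ := hχind.comp_hasFDerivAt x hw
  have hL := (hg1.mul hg2).mul hχ
  simp only [Function.comp_def, Pi.mul_def, Pi.sub_def] at hL
  have hLξ := congrArg (fun (T : EuclideanSpace ℝ (Fin d) →L[ℝ] ℝ) => T ξ) hL.fderiv
  simp only [ContinuousLinearMap.add_apply, ContinuousLinearMap.smul_apply,
    ContinuousLinearMap.sub_apply, ContinuousLinearMap.coe_smul', Pi.smul_apply,
    smul_eq_mul, innerSL_apply_apply, Real.sqrt_sq (norm_nonneg x),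
    real_inner_self_eq_norm_sq] at hLξ
  -- rewrite the goal
  simp only [div_eq_mul_inv]
  have h1 : (inner ℝ ξ (gradient
      (fun y : EuclideanSpace ℝ (Fin d) =>
        ρR ‖y‖ * χ5 ‖y‖ * χin ((inner ℝ y ξ : ℝ) * (‖y‖ * ‖ξ‖)⁻¹ - c * ρR ‖y‖)) x) : ℝ)
      = (fderiv ℝ (fun y : EuclideanSpace ℝ (Fin d) =>
        ρR ‖y‖ * χ5 ‖y‖ * χin ((inner ℝ y ξ : ℝ) * (‖y‖ * ‖ξ‖)⁻¹ - c * ρR ‖y‖)) x) ξ := by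
    rw [real_inner_comm]
    exact InnerProductSpace.toDual_symm_apply
  rw [h1, hLξ, neg_nonneg]
  simp only [nsmul_eq_mul, Nat.cast_ofNat]
  rw [← hs]
  have hb' : 0 ≤ deriv χ5 ‖x‖ := aux_mono_deriv_nonneg hχ5d hχ5_mono
  have he' : deriv χin s ≤ 0 := aux_anti_deriv_nonpos hχind hχin_anti
  have hCS : (inner ℝ x ξ : ℝ)^2 ≤ ‖x‖^2*‖ξ‖^2 := by
    nlinarith [abs_real_inner_le_norm x ξ, sq_abs (inner ℝ x ξ : ℝ),
      abs_nonneg (inner ℝ x ξ : ℝ), norm_nonneg x, norm_nonneg ξ]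
  have hb0 : ‖x‖ ≤ 5*R → χ5 ‖x‖ = 0 ∧ deriv χ5 ‖x‖ = 0 :=
    fun h => ⟨hχ5_zero _ h, hχ5_deriv_zero _ h⟩
  have ha12 : 5*R < ‖x‖ → 1 ≤ ρR ‖x‖ ∧ ρR ‖x‖ ≤ 2 := by
    intro h
    have := hρ_range ‖x‖ (by linarith)
    exact ⟨this.1, this.2⟩
  have he0 : -(1/4 : ℝ) ≤ (inner ℝ x ξ : ℝ)*(‖x‖*‖ξ‖)⁻¹ - c*ρR ‖x‖ →
      χin s = 0 ∧ deriv χin s = 0 := by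
    intro h
    rw [hs]
    exact ⟨hχin_zero _ h, hχin_deriv_zero _ h⟩
  have key := aux_key ‖x‖ ‖ξ‖ (inner ℝ x ξ) c R (ρR ‖x‖) (deriv ρR ‖x‖) (χ5 ‖x‖)
    (deriv χ5 ‖x‖) (χin s) (deriv χin s) hn hk hR hc hc8 hCS (hρ_deriv ‖x‖)
    (hχ5_nonneg ‖x‖) hb' (hχin_nonneg s) he' hb0 ha12 (by rw [hs] at he0 ⊢; exact he0)
  linarith
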